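/- Let 𝔤 be a finite-dimensional real Lie algebra equipped with an inner product B that is ad-invariant, i.e. B([Z,X],Y) + B(X,[Z,Y]) = 0 for all X, Y, Z ∈ 𝔤. Let A : 𝔤 → 𝔤 be a linear endomorphism that is symmetric with respect to B (B(AX,Y) = B(X,AY) for all X, Y ∈ 𝔤). Then B(A[X,Y], X) = 0 for all X, Y ∈ 𝔤 if and only if [X, AX] = 0 for all X ∈ 𝔤. (This is the algebraic content of the paper's Lemma: a left-invariant metric on a compact connected Lie group, with metric endomorphism A relative to an Ad-invariant inner product B, is bi-invariant if and only if [X,AX]=0 for all X in the Lie algebra.) -/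
import Mathlib

/-- Let `L` be a finite-dimensional real Lie algebra equipped with an
inner product `B` (a symmetric, positive-definite bilinear form) that is ad-invariant,
i.e. `B ⁅Z,X⁆ Y + B X ⁅Z,Y⁆ = 0` for all `X Y Z`.  Let `A : L → L` be a linear
endomorphism that is symmetric with respect to `B`.  Then `B (A ⁅X,Y⁆) X = 0` for all
`X, Y` if and only if `⁅X, A X⁆ = 0` for all `X`. -/
theorem bi_invariant_iff_bracket_metric_endomorphism
    (L : Type*) [LieRing L] [LieAlgebra ℝ L] [FiniteDimensional ℝ L]
    (B : LinearMap.BilinForm ℝ L)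
    (hBsymm : ∀ X Y : L, B X Y = B Y X)
    (hBpos : ∀ X : L, X ≠ 0 → 0 < B X X)
    (hBad : ∀ Z X Y : L, B ⁅Z, X⁆ Y + B X ⁅Z, Y⁆ = 0)
    (A : L →ₗ[ℝ] L)
    (hAsymm : ∀ X Y : L, B (A X) Y = B X (A Y)) :
    (∀ X Y : L, B (A ⁅X, Y⁆) X = 0) ↔ (∀ X : L, ⁅X, A X⁆ = 0) := by
  have key : ∀ X Y : L, B (A ⁅X, Y⁆) X = - B Y ⁅X, A X⁆ := by
    intro X Y
    have h1 : B (A ⁅X, Y⁆) X = B ⁅X, Y⁆ (A X) := hAsymm _ _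
    have h2 := hBad X Y (A X)
    linarith
  constructor
  · intro h X
    by_contra hne
    have := key X ⁅X, A X⁆
    rw [h] at this
    have := hBpos _ hne
    linarith
  · intro h X Y
    rw [key, h, map_zero]; ring
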